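/- The scaled truncated Gaussian activation λ_σ(α) = σ(α/σ + N(α/σ)/Φ(α/σ)) converges pointwise to the ReLU function max(α, 0) as σ → 0⁺. -/

import Mathlib

open Real MeasureTheory Filter

noncomputable def gaussPdf (x : ℝ) : ℝ := Real.exp (-x ^ 2 / 2) / Real.sqrt (2 * Real.pi)

noncomputable def gaussCdf (x : ℝ) : ℝ := ∫ t in Set.Iic x, gaussPdf t

/-!
Write `r = N / Φ` for the inverse Mills ratio, so that `λ_σ(α) = α + σ r(α/σ)` for `σ > 0`.
If `α ≥ 0`, then `r(α/σ) ≤ r 0` since `N` peaks at `0` and `Φ` is increasing, so `σ r(α/σ) → 0`.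
If `α < 0`, then `λ_σ(α) = σ (x + r x)` with `x = α/σ → -∞`, and the Mills-ratio bounds
`-x < r x < -x - 1/x` (for `x < 0`) force `x + r x → 0`. These bounds hold because
`x Φ x + N x` and `Φ x + x N x / (x² + 1)` vanish at `-∞` and are strictly increasing, with
derivatives `Φ x` and `2 N x / (x² + 1)²`.
-/

open Asymptotics Topology

lemma pos_of_strictMono_of_tendsto_atBot {α β : Type*} [LinearOrder α] [NoMinOrder α]
    [PartialOrder β] [TopologicalSpace β] [OrderClosedTopology β] {f : α → β} {b : β}
    (hf : StrictMono f) (hb : Tendsto f atBot (𝓝 b)) (x : α) : b < f x := by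
  obtain ⟨y, hy⟩ := exists_lt x
  exact (hf.monotone.le_of_tendsto hb y).trans_lt (hf hy)

lemma tendsto_mul_exp_atBot : Tendsto (fun x : ℝ => x * exp x) atBot (𝓝 0) := by
  have h := ((tendsto_pow_mul_exp_neg_atTop_nhds_zero 1).comp tendsto_neg_atBot_atTop).neg
  simpa using h

lemma isBigO_exp_of_le_mul_exp {f : ℝ → ℝ} {c : ℝ} (l : Filter ℝ) (hf : 0 ≤ f)
    (hle : ∀ x, f x ≤ c * exp x) : f =O[l] exp :=
  .of_bound c (.of_forall fun x => by
    rw [norm_of_nonneg (hf x), norm_of_nonneg (exp_pos x).le]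
    exact hle x)

lemma gaussPdf_pos (x : ℝ) : 0 < gaussPdf x :=
  div_pos (exp_pos _) (Real.sqrt_pos.2 (by positivity))

lemma continuous_gaussPdf : Continuous gaussPdf := by
  unfold gaussPdf
  fun_prop

lemma integrable_gaussPdf : Integrable gaussPdf := by
  have h := (integrable_exp_neg_mul_sq (b := 1 / 2) (by norm_num)).div_const √(2 * π)
  exact h.congr (.of_forall fun x => by simp only [gaussPdf]; ring_nf)

lemma hasDerivAt_gaussPdf (x : ℝ) : HasDerivAt gaussPdf (-x * gaussPdf x) x := by
  have hexponent : HasDerivAt (fun y : ℝ => -y ^ 2 / 2) (-x) x :=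
    (((hasDerivAt_pow 2 x).neg).div_const 2).congr_deriv (by push_cast; ring)
  exact (hexponent.exp.div_const √(2 * π)).congr_deriv (by rw [gaussPdf]; ring)

lemma gaussPdf_le_gaussPdf_zero (x : ℝ) : gaussPdf x ≤ gaussPdf 0 := by
  unfold gaussPdf
  gcongr exp ?_ / _
  nlinarith [sq_nonneg x]

lemma gaussPdf_le_mul_exp (x : ℝ) : gaussPdf x ≤ exp (1 / 2) / √(2 * π) * exp x := by
  rw [gaussPdf, div_mul_eq_mul_div, ← exp_add]
  gcongr
  nlinarith [sq_nonneg (x + 1)]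

lemma gaussCdf_le_mul_exp (x : ℝ) : gaussCdf x ≤ exp (1 / 2) / √(2 * π) * exp x := by
  calc gaussCdf x ≤ ∫ t in Set.Iic x, exp (1 / 2) / √(2 * π) * exp t :=
        setIntegral_mono_on integrable_gaussPdf.integrableOn
          ((integrableOn_exp_Iic x).const_mul _) measurableSet_Iic
          fun t _ => gaussPdf_le_mul_exp t
    _ = exp (1 / 2) / √(2 * π) * exp x := by rw [integral_const_mul, integral_exp_Iic]

lemma gaussCdf_pos (x : ℝ) : 0 < gaussCdf x := by
  have hsupp : Function.support gaussPdf = Set.univ :=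
    Set.eq_univ_of_forall fun t => (gaussPdf_pos t).ne'
  rw [gaussCdf, setIntegral_pos_iff_support_of_nonneg_ae
    (.of_forall fun t => (gaussPdf_pos t).le) integrable_gaussPdf.integrableOn,
    hsupp, Set.univ_inter]
  simp [Real.volume_Iic]

lemma hasDerivAt_gaussCdf (x : ℝ) : HasDerivAt gaussCdf (gaussPdf x) x := by
  have hsplit : (fun y => (∫ t in (0 : ℝ)..y, gaussPdf t) + gaussCdf 0) = gaussCdf := by
    funext y
    rw [gaussCdf, gaussCdf, ← intervalIntegral.integral_Iic_sub_Iic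
      integrable_gaussPdf.integrableOn integrable_gaussPdf.integrableOn]
    ring
  rw [← hsplit]
  exact (intervalIntegral.integral_hasDerivAt_right integrable_gaussPdf.intervalIntegrable
    (continuous_gaussPdf.stronglyMeasurableAtFilter _ _)
    continuous_gaussPdf.continuousAt).add_const _

lemma gaussCdf_strictMono : StrictMono gaussCdf :=
  strictMono_of_deriv_pos fun x => (hasDerivAt_gaussCdf x).deriv ▸ gaussPdf_pos x

lemma gaussPdf_isBigO_exp : gaussPdf =O[atBot] exp :=
  isBigO_exp_of_le_mul_exp _ (fun x => (gaussPdf_pos x).le) gaussPdf_le_mul_exp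

lemma gaussCdf_isBigO_exp : gaussCdf =O[atBot] exp :=
  isBigO_exp_of_le_mul_exp _ (fun x => (gaussCdf_pos x).le) gaussCdf_le_mul_exp

lemma neg_mul_gaussCdf_lt_gaussPdf (x : ℝ) : -x * gaussCdf x < gaussPdf x := by
  set f : ℝ → ℝ := fun x => x * gaussCdf x + gaussPdf x
  have hderiv (y : ℝ) : HasDerivAt f (gaussCdf y) y :=
    (((hasDerivAt_id' y).mul (hasDerivAt_gaussCdf y)).add (hasDerivAt_gaussPdf y)).congr_deriv
      (by ring)
  have hlim : Tendsto f atBot (𝓝 0) := by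
    have hmul := ((isBigO_refl id atBot).mul gaussCdf_isBigO_exp).trans_tendsto
      tendsto_mul_exp_atBot
    simpa using hmul.add (gaussPdf_isBigO_exp.trans_tendsto tendsto_exp_atBot)
  have hmono : StrictMono f := strictMono_of_deriv_pos fun y => (hderiv y).deriv ▸ gaussCdf_pos y
  linarith [pos_of_strictMono_of_tendsto_atBot hmono hlim x]

lemma neg_mul_gaussPdf_lt_mul_gaussCdf (x : ℝ) : -x * gaussPdf x < (x ^ 2 + 1) * gaussCdf x := by
  set g : ℝ → ℝ := fun x => gaussCdf x + x / (x ^ 2 + 1) * gaussPdf x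
  have hderiv (y : ℝ) : HasDerivAt g (2 / (y ^ 2 + 1) ^ 2 * gaussPdf y) y := by
    have hquot : HasDerivAt (fun y : ℝ => y / (y ^ 2 + 1))
        ((1 * (y ^ 2 + 1) - y * (2 * y)) / (y ^ 2 + 1) ^ 2) y :=
      (hasDerivAt_id y).div (by simpa using (hasDerivAt_pow 2 y).add_const 1) (by positivity)
    refine ((hasDerivAt_gaussCdf y).add (hquot.mul (hasDerivAt_gaussPdf y))).congr_deriv ?_
    field_simp
    ring
  have hlim : Tendsto g atBot (𝓝 0) := by
    have hfrac : (fun y : ℝ => y / (y ^ 2 + 1)) =O[atBot] id :=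
      .of_bound 1 (.of_forall fun y => by
        rw [norm_div, one_mul, id]
        exact div_le_self (norm_nonneg y) (by rw [Real.norm_of_nonneg (by positivity)]; nlinarith))
    have hmul := (hfrac.mul gaussPdf_isBigO_exp).trans_tendsto tendsto_mul_exp_atBot
    simpa using (gaussCdf_isBigO_exp.trans_tendsto tendsto_exp_atBot).add hmul
  have hmono : StrictMono g := strictMono_of_deriv_pos fun y =>
    (hderiv y).deriv ▸ mul_pos (by positivity) (gaussPdf_pos y)
  have hg := pos_of_strictMono_of_tendsto_atBot hmono hlim x
  simp only [g] at hg
  have hx : 0 < x ^ 2 + 1 := by positivity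
  rw [div_mul_eq_mul_div, ← sub_neg_eq_add, sub_pos, neg_div', div_lt_iff₀ hx] at hg
  linarith

noncomputable def invMillsRatio (x : ℝ) : ℝ := gaussPdf x / gaussCdf x

lemma invMillsRatio_nonneg (x : ℝ) : 0 ≤ invMillsRatio x :=
  div_nonneg (gaussPdf_pos x).le (gaussCdf_pos x).le

lemma invMillsRatio_le_invMillsRatio_zero {x : ℝ} (hx : 0 ≤ x) :
    invMillsRatio x ≤ invMillsRatio 0 :=
  div_le_div₀ (gaussPdf_pos 0).le (gaussPdf_le_gaussPdf_zero x) (gaussCdf_pos 0)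
    (gaussCdf_strictMono.monotone hx)

lemma neg_lt_invMillsRatio (x : ℝ) : -x < invMillsRatio x :=
  (lt_div_iff₀ (gaussCdf_pos x)).2 (neg_mul_gaussCdf_lt_gaussPdf x)

lemma invMillsRatio_lt {x : ℝ} (hx : x < 0) : invMillsRatio x < -x - x⁻¹ := by
  have h : -x - x⁻¹ = (x ^ 2 + 1) / -x := by field_simp; ring
  rw [h, invMillsRatio, div_lt_div_iff₀ (gaussCdf_pos x) (neg_pos.2 hx)]
  linarith [neg_mul_gaussPdf_lt_mul_gaussCdf x]

lemma tendsto_add_invMillsRatio_atBot :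
    Tendsto (fun x => x + invMillsRatio x) atBot (𝓝 0) := by
  have hupper : Tendsto (fun x : ℝ => -x⁻¹) atBot (𝓝 0) := by
    simpa using (tendsto_inv_atBot_zero (𝕜 := ℝ)).neg
  refine tendsto_of_tendsto_of_tendsto_of_le_of_le' tendsto_const_nhds hupper
    (.of_forall fun x => by linarith [neg_lt_invMillsRatio x]) ?_
  filter_upwards [eventually_lt_atBot 0] with x hx
  linarith [invMillsRatio_lt hx]

theorem scaled_tg_activation_tendsto_relu (α : ℝ) :
    Filter.Tendsto
      (fun σ : ℝ => σ * (α / σ + gaussPdf (α / σ) / gaussCdf (α / σ)))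
      (nhdsWithin 0 (Set.Ioi 0)) (nhds (max α 0)) := by
  have hσ : Tendsto (fun σ : ℝ => σ) (𝓝[>] 0) (𝓝 0) :=
    tendsto_nhdsWithin_of_tendsto_nhds tendsto_id
  rcases le_or_gt 0 α with hα | hα
  · have hbdd : IsBoundedUnder (· ≤ ·) (𝓝[>] 0) (fun σ => ‖invMillsRatio (α / σ)‖) :=
      isBoundedUnder_of_eventually_le (a := invMillsRatio 0) <| by
        filter_upwards [self_mem_nhdsWithin] with σ (hσpos : 0 < σ)
        rw [norm_of_nonneg (invMillsRatio_nonneg _)]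
        exact invMillsRatio_le_invMillsRatio_zero (div_nonneg hα hσpos.le)
    have hlim := (hσ.zero_mul_isBoundedUnder_le hbdd).const_add α
    rw [add_zero] at hlim
    rw [max_eq_left hα]
    refine hlim.congr' ?_
    filter_upwards [self_mem_nhdsWithin] with σ (hσpos : 0 < σ)
    rw [mul_add, mul_div_cancel₀ _ hσpos.ne', invMillsRatio]
  · have hquot : Tendsto (fun σ => α / σ) (𝓝[>] 0) atBot := by
      simpa [div_eq_mul_inv] using tendsto_inv_nhdsGT_zero.const_mul_atTop_of_neg hα
    rw [max_eq_right hα.le]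
    simpa [invMillsRatio] using hσ.mul (tendsto_add_invMillsRatio_atBot.comp hquot)
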